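/- The minimum Steiner-flow cost satisfies the triangle-type inequality along shortest paths: δ(v, S) ≤ dist(v, u) · max_{d∈S} x(d) + δ(u, S) for all nodes u, v, where dist denotes weighted shortest-path distance. -/

import Mathlib

/-!
To move the root of a Steiner tree from `u` to a neighbour `w`, add the edge `w → u` and delete
the edge entering `w`. Below every other vertex the new tree has no destination that was not
already there, so the cost grows by at most `e w u · max x`. Re-rooting along a walk from `v`
to `u` turns any tree for `u` into one for `v` at extra cost `walkCost · max x`, and taking
infima over walks and trees gives the bound.
-/

namespace OST

variable {V : Type} [DecidableEq V]

/-- A feasible flow for the outflow-constrained minimum flow problem. -/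
structure Feasible (E : V → V → Prop) (s : V) (D : Set V) (x : V → ℝ)
    (f : V → V → ℝ) : Prop where
  nonneg : ∀ i j, 0 ≤ f i j
  support : ∀ i j, ¬ E i j → f i j = 0
  /-- at every non-source node, every outflow value is bounded by some inflow value
      (max outflow ≤ max inflow) -/
  conserve : ∀ i, i ≠ s → ∀ j, ∃ k, f i j ≤ f k i
  /-- every destination receives inflow at least its demand -/
  demand : ∀ d ∈ D, ∃ i, x d ≤ f i d

/-- Total weighted cost of a flow. -/
noncomputable def cost [Fintype V] (e f : V → V → ℝ) : ℝ :=
  ∑ i, ∑ j, e i j * f i j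

/-- The (undirected) flow-carrying edge relation. -/
def carry (f : V → V → ℝ) (a b : V) : Prop := 0 < f a b ∨ 0 < f b a

/-- Directed reachability inside a set of directed edges. -/
def reach (T : Set (V × V)) (a b : V) : Prop :=
  Relation.ReflTransGen (fun p q => (p, q) ∈ T) a b

/-- `T` is a tree rooted at `v`, edges directed away from the root. -/
structure IsRootedTree (E : V → V → Prop) (v : V) (T : Set (V × V)) : Prop where
  edges : ∀ p ∈ T, E p.1 p.2
  parent_unique : ∀ u u' w, (u, w) ∈ T → (u', w) ∈ T → u = u'
  root_no_parent : ∀ u, (u, v) ∉ T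
  reach_root : ∀ p ∈ T, reach T v p.1

/-- The rooted edge set `T` connects `v` to every node of `S`. -/
def Spans (T : Set (V × V)) (v : V) (S : Set V) : Prop := ∀ d ∈ S, reach T v d

/-- Maximum demand among destinations of `S` lying below node `w` in `T`
    (`0` if there are none, by convention of `sSup` on `ℝ`). -/
noncomputable def maxBelow (T : Set (V × V)) (S : Set V) (x : V → ℝ) (w : V) : ℝ :=
  sSup (x '' {d ∈ S | reach T w d})

/-- Steiner-flow cost of a rooted tree: each edge is charged its weight times the
    maximum demand among destinations of `S` below it. -/
noncomputable def treeCost (e : V → V → ℝ) (x : V → ℝ) (S : Set V)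
    (T : Finset (V × V)) : ℝ :=
  ∑ p ∈ T, e p.1 p.2 * maxBelow (↑T) S x p.2

/-- Minimum Steiner-flow cost from root `v` to destination set `S`. -/
noncomputable def delta (E : V → V → Prop) (e : V → V → ℝ) (x : V → ℝ)
    (v : V) (S : Set V) : ℝ :=
  sInf {c | ∃ T : Finset (V × V),
    IsRootedTree E v ↑T ∧ Spans (↑T) v S ∧ c = treeCost e x S T}

/-- `l` lists the successive vertices of a walk starting at the given vertex. -/
def IsWalk (R : V → V → Prop) : V → List V → Prop
  | _, [] => True
  | a, b :: l => R a b ∧ IsWalk R b l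

/-- Total edge weight of a walk. -/
noncomputable def walkCost (e : V → V → ℝ) : V → List V → ℝ
  | _, [] => 0
  | a, b :: l => e a b + walkCost e b l

/-- Weighted shortest-path distance. -/
noncomputable def dist (E : V → V → Prop) (e : V → V → ℝ) (a b : V) : ℝ :=
  sInf {c | ∃ l : List V, IsWalk E a l ∧
    (a :: l).getLast (List.cons_ne_nil a l) = b ∧ c = walkCost e a l}

/-- Hop distance in a directed relation. -/
noncomputable def hopDist (R : V → V → Prop) (a b : V) : ℕ :=
  sInf {n | ∃ l : List V, IsWalk R a l ∧
    (a :: l).getLast (List.cons_ne_nil a l) = b ∧ l.length = n}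

/-- A feasible flow supported on the rooted tree `T`. -/
structure TreeFeasible (T : Set (V × V)) (D : Set V) (x : V → ℝ)
    (f : V → V → ℝ) : Prop where
  nonneg : ∀ i j, 0 ≤ f i j
  support : ∀ i j, (i, j) ∉ T → f i j = 0
  /-- flow is nonincreasing away from the root -/
  mono : ∀ u w z, (u, w) ∈ T → (w, z) ∈ T → f w z ≤ f u w
  /-- each destination's parent edge carries at least its demand -/
  demand : ∀ d ∈ D, ∀ u, (u, d) ∈ T → x d ≤ f u d


open Pointwise

section

omit [DecidableEq V]

theorem le_sInf_mul_add_sInf {A B : Set ℝ} {k M : ℝ} (hA : A.Nonempty) (hB : B.Nonempty)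
    (hM : 0 ≤ M) (h : ∀ a ∈ A, ∀ b ∈ B, k ≤ a * M + b) : k ≤ sInf A * M + sInf B := by
  have hAM : ∀ b ∈ B, k - b ≤ M * sInf A := fun b hb => by
    rw [← smul_eq_mul, ← Real.sInf_smul_of_nonneg hM]
    refine le_csInf hA.smul_set ?_
    rintro _ ⟨a, ha, rfl⟩
    linarith [h a ha b hb, smul_eq_mul M a]
  have : k - M * sInf A ≤ sInf B := le_csInf hB fun b hb => by linarith [hAM b hb]
  linarith

def steinerCosts (E : V → V → Prop) (e : V → V → ℝ) (x : V → ℝ) (v : V) (S : Set V) :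
    Set ℝ :=
  {c | ∃ T : Finset (V × V), IsRootedTree E v ↑T ∧ Spans (↑T) v S ∧ c = treeCost e x S T}

def walkCosts (E : V → V → Prop) (e : V → V → ℝ) (a b : V) : Set ℝ :=
  {c | ∃ l : List V, IsWalk E a l ∧
    (a :: l).getLast (List.cons_ne_nil a l) = b ∧ c = walkCost e a l}

theorem delta_eq_sInf (E : V → V → Prop) (e : V → V → ℝ) (x : V → ℝ) (v : V) (S : Set V) :
    delta E e x v S = sInf (steinerCosts E e x v S) := rfl

theorem dist_eq_sInf (E : V → V → Prop) (e : V → V → ℝ) (a b : V) :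
    dist E e a b = sInf (walkCosts E e a b) := rfl

section Walk

variable {E : V → V → Prop} {e : V → V → ℝ}

theorem walkCost_nonneg (he : ∀ i j, E i j → 0 ≤ e i j) :
    ∀ {a : V} {l : List V}, IsWalk E a l → 0 ≤ walkCost e a l
  | _, [], _ => le_rfl
  | a, b :: _, hw => add_nonneg (he a b hw.1) (walkCost_nonneg he hw.2)

theorem exists_isWalk_of_reflTransGen {a b : V} (h : Relation.ReflTransGen E a b) :
    ∃ l, IsWalk E a l ∧ (a :: l).getLast (List.cons_ne_nil a l) = b := by
  induction h using Relation.ReflTransGen.head_induction_on with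
  | refl => exact ⟨[], trivial, rfl⟩
  | head hab _ ih =>
    obtain ⟨l, hw, hend⟩ := ih
    exact ⟨_ :: l, ⟨hab, hw⟩, by rwa [List.getLast_cons (List.cons_ne_nil _ _)]⟩

theorem walkCosts_nonempty {a b : V} (h : Relation.ReflTransGen E a b) :
    (walkCosts E e a b).Nonempty :=
  let ⟨l, hw, hend⟩ := exists_isWalk_of_reflTransGen h
  ⟨_, l, hw, hend, rfl⟩

theorem dist_nonneg (he : ∀ i j, E i j → 0 ≤ e i j) (a b : V) : 0 ≤ dist E e a b :=
  Real.sInf_nonneg (by rintro _ ⟨l, hw, -, rfl⟩; exact walkCost_nonneg he hw)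

end Walk

section MaxBelow

variable {T T' : Set (V × V)} {S : Set V} {x : V → ℝ}

theorem sSup_image_nonneg (hx : ∀ d ∈ S, 0 ≤ x d) : 0 ≤ sSup (x '' S) :=
  Real.sSup_nonneg (by rintro _ ⟨d, hd, rfl⟩; exact hx d hd)

theorem maxBelow_nonneg (hx : ∀ d ∈ S, 0 ≤ x d) (w : V) : 0 ≤ maxBelow T S x w :=
  Real.sSup_nonneg (by rintro _ ⟨d, ⟨hd, -⟩, rfl⟩; exact hx d hd)

theorem maxBelow_le_sSup (hx : ∀ d ∈ S, 0 ≤ x d) (hbdd : BddAbove (x '' S)) (w : V) :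
    maxBelow T S x w ≤ sSup (x '' S) :=
  Real.sSup_le (by rintro _ ⟨d, ⟨hd, -⟩, rfl⟩; exact le_csSup hbdd ⟨d, hd, rfl⟩)
    (sSup_image_nonneg hx)

theorem maxBelow_mono (hx : ∀ d ∈ S, 0 ≤ x d) (hbdd : BddAbove (x '' S)) {w w' : V}
    (h : ∀ d ∈ S, reach T w d → reach T' w' d) : maxBelow T S x w ≤ maxBelow T' S x w' :=
  Real.sSup_le
    (by
      rintro _ ⟨d, ⟨hd, hr⟩, rfl⟩
      exact le_csSup (hbdd.mono (Set.image_mono (Set.sep_subset _ _))) ⟨d, ⟨hd, h d hd hr⟩, rfl⟩)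
    (maxBelow_nonneg hx w')

end MaxBelow

theorem steinerCosts_nonneg {E : V → V → Prop} {e : V → V → ℝ} {x : V → ℝ} {v : V}
    {S : Set V} (he : ∀ i j, E i j → 0 ≤ e i j) (hx : ∀ d ∈ S, 0 ≤ x d) :
    ∀ c ∈ steinerCosts E e x v S, 0 ≤ c := by
  rintro _ ⟨T, hT, -, rfl⟩
  exact Finset.sum_nonneg fun p hp => mul_nonneg (he _ _ (hT.edges p hp)) (maxBelow_nonneg hx _)

end

theorem Spans.finite {T : Finset (V × V)} {v : V} {S : Set V} (h : Spans (↑T) v S) :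
    S.Finite := by
  refine ((T.image Prod.snd).finite_toSet.insert v).subset fun d hd => ?_
  rcases (h d hd).cases_tail with rfl | ⟨c, -, hc⟩
  · exact Set.mem_insert _ _
  · exact Set.mem_insert_of_mem _ (Finset.mem_image_of_mem Prod.snd hc)

def reroot (T : Finset (V × V)) (w u : V) : Finset (V × V) :=
  insert (w, u) (T.filter fun p => p.2 ≠ w)

section Reroot

variable {T : Finset (V × V)} {w u : V}

theorem mem_reroot {p : V × V} : p ∈ reroot T w u ↔ p = (w, u) ∨ p ∈ T ∧ p.2 ≠ w := by
  simp [reroot]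

theorem reach_reroot_of_reach {z : V} (h : reach (↑T) u z) : reach (↑(reroot T w u)) w z := by
  induction h with
  | refl => exact .single (mem_reroot.2 (.inl rfl))
  | @tail y z _ hyz ih =>
    by_cases hz : z = w
    · exact hz ▸ .refl
    · exact ih.tail (mem_reroot.2 (.inr ⟨hyz, hz⟩))

theorem reach_of_reach_reroot {z d : V} (h : reach (↑(reroot T w u)) z d) (hz : z ≠ w) :
    reach (↑T) z d := by
  induction h using Relation.ReflTransGen.head_induction_on with
  | refl => exact .refl
  | head hzy _ ih =>
    obtain h | ⟨hzy, hy⟩ := mem_reroot.1 hzy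
    · exact absurd (Prod.mk.inj h).1 hz
    · exact .head hzy (ih hy)

variable {E : V → V → Prop}

theorem IsRootedTree.reroot (hT : IsRootedTree E u ↑T) (hwu : E w u) (hne : w ≠ u) :
    IsRootedTree E w ↑(OST.reroot T w u) where
  edges p hp := by
    obtain rfl | ⟨hp, -⟩ := mem_reroot.1 hp
    exacts [hwu, hT.edges p hp]
  parent_unique a a' z ha ha' := by
    obtain h | ⟨h, -⟩ := mem_reroot.1 ha <;> obtain h' | ⟨h', -⟩ := mem_reroot.1 ha'
    · exact (Prod.mk.inj h).1.trans (Prod.mk.inj h').1.symm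
    · exact absurd ((Prod.mk.inj h).2 ▸ h') (hT.root_no_parent a')
    · exact absurd ((Prod.mk.inj h').2 ▸ h) (hT.root_no_parent a)
    · exact hT.parent_unique a a' z h h'
  root_no_parent a ha := by
    obtain h | ⟨-, h⟩ := mem_reroot.1 ha
    exacts [hne (Prod.mk.inj h).2, h rfl]
  reach_root p hp := by
    obtain rfl | ⟨hp, -⟩ := mem_reroot.1 hp
    exacts [.refl, reach_reroot_of_reach (hT.reach_root p hp)]

theorem Spans.reroot {S : Set V} (h : Spans (↑T) u S) : Spans (↑(OST.reroot T w u)) w S :=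
  fun d hd => reach_reroot_of_reach (h d hd)

theorem treeCost_reroot_le {e : V → V → ℝ} {x : V → ℝ} {S : Set V}
    (he : ∀ i j, E i j → 0 ≤ e i j) (hx : ∀ d ∈ S, 0 ≤ x d) (hbdd : BddAbove (x '' S))
    (hT : IsRootedTree E u ↑T) (hwu : E w u) :
    treeCost e x S (OST.reroot T w u) ≤ e w u * sSup (x '' S) + treeCost e x S T := by
  set F := T.filter fun p => p.2 ≠ w
  have hwuF : (w, u) ∉ F := fun h => hT.root_no_parent w (Finset.mem_filter.1 h).1
  have hF : ∑ p ∈ F, e p.1 p.2 * maxBelow (↑(OST.reroot T w u)) S x p.2 ≤ treeCost e x S T :=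
    calc ∑ p ∈ F, e p.1 p.2 * maxBelow (↑(OST.reroot T w u)) S x p.2
        ≤ ∑ p ∈ F, e p.1 p.2 * maxBelow (↑T) S x p.2 :=
          Finset.sum_le_sum fun p hp =>
            have ⟨hpT, hpw⟩ := Finset.mem_filter.1 hp
            mul_le_mul_of_nonneg_left
              (maxBelow_mono hx hbdd fun _ _ hr => reach_of_reach_reroot hr hpw)
              (he _ _ (hT.edges p hpT))
      _ ≤ treeCost e x S T :=
          Finset.sum_le_sum_of_subset_of_nonneg (Finset.filter_subset _ _) fun p hp _ =>
            mul_nonneg (he _ _ (hT.edges p hp)) (maxBelow_nonneg hx _)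
  rw [treeCost, OST.reroot, Finset.sum_insert hwuF]
  exact add_le_add
    (mul_le_mul_of_nonneg_left (maxBelow_le_sSup hx hbdd _) (he _ _ hwu)) hF

end Reroot

section Transport

variable {E : V → V → Prop} {e : V → V → ℝ} {x : V → ℝ} {S : Set V}

theorem exists_steinerCost_le_of_isWalk (he : ∀ i j, E i j → 0 ≤ e i j)
    (hx : ∀ d ∈ S, 0 ≤ x d) (hbdd : BddAbove (x '' S)) :
    ∀ {w : V} {l : List V}, IsWalk E w l →
      ∀ c ∈ steinerCosts E e x ((w :: l).getLast (List.cons_ne_nil w l)) S,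
        ∃ c' ∈ steinerCosts E e x w S, c' ≤ walkCost e w l * sSup (x '' S) + c
  | _, [], _, c, hc => ⟨c, hc, by simp [walkCost]⟩
  | w, b :: l, hw, c, hc => by
    rw [List.getLast_cons (List.cons_ne_nil b l)] at hc
    obtain ⟨_, ⟨T, hT, hsp, rfl⟩, hTc⟩ := exists_steinerCost_le_of_isWalk he hx hbdd hw.2 c hc
    have hwb : 0 ≤ e w b * sSup (x '' S) := mul_nonneg (he w b hw.1) (sSup_image_nonneg hx)
    show ∃ c' ∈ _, c' ≤ (e w b + walkCost e b l) * sSup (x '' S) + c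
    by_cases hne : w = b
    · subst hne
      exact ⟨_, ⟨T, hT, hsp, rfl⟩, by linarith⟩
    · have := treeCost_reroot_le he hx hbdd hT hw.1
      exact ⟨_, ⟨_, hT.reroot hw.1 hne, hsp.reroot, rfl⟩, by linarith⟩

theorem exists_steinerCost_le_of_mem_walkCosts (he : ∀ i j, E i j → 0 ≤ e i j)
    (hx : ∀ d ∈ S, 0 ≤ x d) (hbdd : BddAbove (x '' S)) {a b : V} {c c' : ℝ}
    (hc : c ∈ walkCosts E e a b) (hc' : c' ∈ steinerCosts E e x b S) :
    ∃ c'' ∈ steinerCosts E e x a S, c'' ≤ c * sSup (x '' S) + c' := by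
  obtain ⟨l, hw, rfl, rfl⟩ := hc
  exact exists_steinerCost_le_of_isWalk he hx hbdd hw c' hc'

end Transport

theorem stmt13_general (E : V → V → Prop)
    (hconn : ∀ a b : V, Relation.ReflTransGen E a b)
    (e : V → V → ℝ) (hepos : ∀ i j, E i j → 0 < e i j)
    (S : Set V) (x : V → ℝ) (hx : ∀ d ∈ S, 0 < x d) :
    ∀ v u : V, delta E e x v S ≤ dist E e v u * sSup (x '' S) + delta E e x u S := by
  intro v u
  have he : ∀ i j, E i j → 0 ≤ e i j := fun i j h => (hepos i j h).le
  have hx0 : ∀ d ∈ S, 0 ≤ x d := fun d hd => (hx d hd).le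
  have hM : 0 ≤ sSup (x '' S) := sSup_image_nonneg hx0
  rw [delta_eq_sInf, delta_eq_sInf, dist_eq_sInf]
  rcases (steinerCosts E e x v S).eq_empty_or_nonempty with hv | ⟨c₀, hc₀⟩
  · rw [hv, Real.sInf_empty]
    exact add_nonneg (mul_nonneg (dist_nonneg he v u) hM)
      (Real.sInf_nonneg (steinerCosts_nonneg he hx0))
  have hbdd : BddAbove (x '' S) := by
    obtain ⟨T₀, -, hsp₀, -⟩ := hc₀
    exact (hsp₀.finite.image x).bddAbove
  -- the trees for `u` must be shown to exist, or `delta E e x u S` would be the junk `sInf ∅ = 0`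
  have hu : (steinerCosts E e x u S).Nonempty := by
    obtain ⟨c, hc⟩ := walkCosts_nonempty (e := e) (hconn u v)
    obtain ⟨c', hc', -⟩ := exists_steinerCost_le_of_mem_walkCosts he hx0 hbdd hc hc₀
    exact ⟨c', hc'⟩
  refine le_sInf_mul_add_sInf (walkCosts_nonempty (hconn v u)) hu hM fun c hc t ht => ?_
  obtain ⟨c', hc', hle⟩ := exists_steinerCost_le_of_mem_walkCosts he hx0 hbdd hc ht
  exact (csInf_le ⟨0, steinerCosts_nonneg he hx0⟩ hc').trans hle

/-- triangle-type inequality for the Steiner-flow cost along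
shortest paths: `δ(v,S) ≤ dist(v,u) · max_{d∈S} x d + δ(u,S)`. -/
theorem stmt13 (E : V → V → Prop) (hE : ∀ a b, E a b → E b a)
    (hconn : ∀ a b : V, Relation.ReflTransGen E a b)
    (e : V → V → ℝ) (hepos : ∀ i j, E i j → 0 < e i j)
    (S : Set V) (hS : S.Nonempty) (x : V → ℝ) (hx : ∀ d ∈ S, 0 < x d) :
    ∀ v u : V, delta E e x v S ≤ dist E e v u * sSup (x '' S) + delta E e x u S :=
  stmt13_general E hconn e hepos S x hx

end OST
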